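/- Let λ > 2 and let σ > 1/2 be real. For every z in the closure of 𝓔₁ the following hold: 1 − nλz ≠ 0 for every integer n ≥ 1, and the series ∑_{n≥1} |1 − nλz|^{−2σ} converges (the family n ↦ |1 − nλz|^{−2σ} is summable). In particular, for s ∈ ℂ with Re s > 1/2 the series of weights appearing in the transfer operator, ∑_{n≥1} |1 − nλz|^{−2·Re s}, converges on the closure of 𝓔₁. -/

import Mathlib

/-!
Put `q = (λ - 2)/(λ + 2) > 0`. Every point of the closed disc `closure 𝓔₁` has modulus at least
`2/(λ + 2)`, i.e. `‖λ z‖ ≥ 1 + q`, so the reverse triangle inequality gives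
`‖1 - nλz‖ ≥ n(1 + q) - 1 ≥ n q` for `n ≥ 1`. The weights are therefore dominated by
`(q n)^{-2σ}`, a convergent `p`-series since `2σ > 1`.
-/

open Metric

theorem summable_rpow_neg_of_mul_succ_le {f : ℕ → ℝ} {c p : ℝ} (hc : 0 < c) (hp : 1 < p)
    (hf : ∀ n : ℕ, c * (n + 1) ≤ f n) : Summable fun n => f n ^ (-p) := by
  have hsucc : Summable fun n : ℕ => ((n : ℝ) + 1) ^ (-p) := by
    simpa using (summable_nat_add_iff 1).mpr (Real.summable_nat_rpow.mpr (by linarith))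
  refine .of_nonneg_of_le (fun n => Real.rpow_nonneg ((by positivity : 0 ≤ c * (n + 1)).trans
    (hf n)) _) (fun n => ?_) (hsucc.mul_left (c ^ (-p)))
  calc f n ^ (-p) ≤ (c * (n + 1)) ^ (-p) :=
        Real.rpow_le_rpow_of_nonpos (by positivity) (hf n) (by linarith)
    _ = c ^ (-p) * ((n : ℝ) + 1) ^ (-p) := Real.mul_rpow hc.le (by positivity)

theorem sub_norm_le_norm_of_mem_closedBall {E : Type*} [SeminormedAddCommGroup E] {c z : E}
    {r : ℝ} (hz : z ∈ closedBall c r) : ‖c‖ - r ≤ ‖z‖ := by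
  have := norm_sub_norm_le c z
  rw [norm_sub_rev, ← dist_eq_norm] at this
  linarith [mem_closedBall.mp hz]

theorem nat_mul_le_norm_one_sub_nat_mul {w : ℂ} {q : ℝ} (hw : 1 + q ≤ ‖w‖) {n : ℕ}
    (hn : 1 ≤ n) : n * q ≤ ‖1 - n * w‖ := by
  have hn' : (1 : ℝ) ≤ n := by exact_mod_cast hn
  calc (n : ℝ) * q ≤ n * (1 + q) - 1 := by linarith
    _ ≤ n * ‖w‖ - 1 := by gcongr
    _ = ‖(n : ℂ) * w‖ - ‖(1 : ℂ)‖ := by simp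
    _ ≤ ‖1 - n * w‖ := by rw [norm_sub_rev]; exact norm_sub_norm_le _ _

theorem one_add_le_norm_mul_of_mem_closedBall {lam : ℝ} (hlam : 2 < lam) {z : ℂ}
    (hz : z ∈ closedBall ((((2 * lam) / ((lam + 2) * (lam - 2)) : ℝ)) : ℂ)
      (4 / ((lam + 2) * (lam - 2)))) :
    1 + (lam - 2) / (lam + 2) ≤ ‖(lam : ℂ) * z‖ := by
  have hz' := sub_norm_le_norm_of_mem_closedBall hz
  rw [Complex.norm_real, Real.norm_of_nonneg (by positivity)] at hz'
  have hradius : (2 * lam) / ((lam + 2) * (lam - 2)) - 4 / ((lam + 2) * (lam - 2))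
      = 2 / (lam + 2) := by
    field_simp [(by linarith : lam - 2 ≠ 0)]
    ring
  calc 1 + (lam - 2) / (lam + 2) = lam * (2 / (lam + 2)) := by field_simp; ring
    _ ≤ lam * ‖z‖ := by gcongr; linarith
    _ = ‖(lam : ℂ) * z‖ := by rw [norm_mul, Complex.norm_real, Real.norm_of_nonneg (by linarith)]

theorem transfer_weights_summable
    (lam : ℝ) (hlam : 2 < lam) (σ : ℝ) (hσ : 1 / 2 < σ)
    (E1 : Set ℂ)
    (hE1 : E1 = Metric.ball ((((2 * lam) / ((lam + 2) * (lam - 2)) : ℝ)) : ℂ)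
      (4 / ((lam + 2) * (lam - 2)))) :
    ∀ z ∈ closure E1,
      (∀ n : ℕ, 1 ≤ n → (1 : ℂ) - (n : ℂ) * lam * z ≠ 0) ∧
      Summable (fun n : ℕ =>
        (‖(1 : ℂ) - ((n : ℂ) + 1) * lam * z‖) ^ (-(2 * σ))) ∧
      (∀ s : ℂ, 1 / 2 < s.re → Summable (fun n : ℕ =>
        (‖(1 : ℂ) - ((n : ℂ) + 1) * lam * z‖) ^ (-(2 * s.re)))) := by
  intro z hz
  have hr : 0 < 4 / ((lam + 2) * (lam - 2)) := by
    have : 0 < lam - 2 := by linarith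
    positivity
  rw [hE1, closure_ball _ hr.ne'] at hz
  have hq : 0 < (lam - 2) / (lam + 2) := div_pos (by linarith) (by linarith)
  have hbound (n : ℕ) (hn : 1 ≤ n) : n * ((lam - 2) / (lam + 2)) ≤ ‖1 - n * lam * z‖ := by
    rw [mul_assoc]
    exact nat_mul_le_norm_one_sub_nat_mul (one_add_le_norm_mul_of_mem_closedBall hlam hz) hn
  have hsummable (p : ℝ) (hp : 1 / 2 < p) :
      Summable fun n : ℕ => ‖(1 : ℂ) - ((n : ℂ) + 1) * lam * z‖ ^ (-(2 * p)) :=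
    summable_rpow_neg_of_mul_succ_le hq (by linarith) fun n => by
      simpa [mul_comm] using hbound (n + 1) n.succ_pos
  refine ⟨fun n hn hzero => ?_, hsummable σ hσ, fun s hs => hsummable s.re hs⟩
  have := hbound n hn
  rw [hzero, norm_zero] at this
  have : (0 : ℝ) < n * ((lam - 2) / (lam + 2)) := mul_pos (by exact_mod_cast hn) hq
  linarith
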